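/- arXiv:1302.5756 — 6 statements merged into one kernel-verified Lean document; each statement's English description precedes it below -/
import Mathlib

section
/- If G : Ψ → Φ is a functor between operator categories that preserves terminal objects and the formation of fibers, and for every object I of Ψ the induced map |I| → |GI| on points is surjective, then for every object I of Ψ the map |I| → |GI| is in fact a bijection. -/
open CategoryTheory Limits

universe v u v' u'

/-- An operator category: an essentially small category with a terminal object,
fibers of morphisms over points, and finite hom-sets. -/
class OperatorCategory (C : Type u) [Category.{v} C] where
  /-- a chosen terminal object -/
  One : C
  isTerminalOne : IsTerminal One
  fibers : ∀ {J I : C} (f : J ⟶ I) (i : One ⟶ I), HasPullback i f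
  finiteHom : ∀ I J : C, Finite (I ⟶ J)
  essSmall : EssentiallySmall.{v} C

/-!
Two points `j₁ j₂ : 1 ⟶ I` coincide as soon as their fiber product `1 ×_I 1` has a point.
If `G` identifies them, the fiber square of `j₂` over `j₁` is sent to a pullback over the
terminal object `G 1`, so `G (1 ×_I 1)` has a point; by surjectivity on points it comes from
a point of `1 ×_I 1`, hence `j₁ = j₂`.
-/

theorem CategoryTheory.Limits.IsTerminal.eq_of_comp_eq_of_hom {C : Type*} [Category C]
    {T P I : C} (hT : IsTerminal T) {j₁ j₂ : T ⟶ I} {fst snd : P ⟶ T}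
    (w : fst ≫ j₁ = snd ≫ j₂) (p : T ⟶ P) : j₁ = j₂ :=
  calc j₁ = (p ≫ fst) ≫ j₁ := by rw [hT.hom_ext (p ≫ fst) (𝟙 T), Category.id_comp]
    _ = (p ≫ snd) ≫ j₂ := by rw [Category.assoc, Category.assoc, w]
    _ = j₂ := by rw [hT.hom_ext (p ≫ snd) (𝟙 T), Category.id_comp]

/-- an operator morphism induces bijections on point sets. -/
theorem operatorMorphism_points_bijective
    {Ψ : Type u} {Φ : Type u'} [Category.{v} Ψ] [Category.{v'} Φ]
    [OperatorCategory Ψ] [OperatorCategory Φ] (G : Ψ ⥤ Φ)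
    (hT : IsTerminal (G.obj (OperatorCategory.One : Ψ)))
    (hfib : ∀ {P J I : Ψ} (p₁ : P ⟶ J) (p₂ : P ⟶ (OperatorCategory.One : Ψ))
      (f : J ⟶ I) (i : (OperatorCategory.One : Ψ) ⟶ I),
      IsPullback p₁ p₂ f i → IsPullback (G.map p₁) (G.map p₂) (G.map f) (G.map i))
    (hsurj : ∀ I : Ψ, Function.Surjective
      (fun j : (OperatorCategory.One : Ψ) ⟶ I =>
        hT.from (OperatorCategory.One : Φ) ≫ G.map j)) :
    ∀ I : Ψ, Function.Bijective
      (fun j : (OperatorCategory.One : Ψ) ⟶ I =>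
        hT.from (OperatorCategory.One : Φ) ≫ G.map j) := by
  intro I
  refine ⟨fun j₁ j₂ h => ?_, hsurj I⟩
  have : HasPullback j₁ j₂ := OperatorCategory.fibers j₂ j₁
  have hGfiber := hfib _ _ _ _ (IsPullback.of_hasPullback j₁ j₂).flip
  obtain ⟨p, -⟩ := hsurj _ (hGfiber.lift (hT.from _) (hT.from _) h.symm)
  exact OperatorCategory.isTerminalOne.eq_of_comp_eq_of_hom pullback.condition p
end

section
/- Interval inclusions in an operator category are monomorphisms. -/
open CategoryTheory Limits

universe v u v' u'

variable {C : Type u} [Category.{v} C] [OperatorCategory C]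

/-- A fiber inclusion: a morphism that is a pullback of a point `{i} → I`
along some morphism `J → I`. -/
def IsFiberInclusion {K J : C} (k : K ⟶ J) : Prop :=
  ∃ (I : C) (f : J ⟶ I) (i : (OperatorCategory.One : C) ⟶ I),
    IsPullback k (OperatorCategory.isTerminalOne.from K) f i

/-- An interval inclusion: a finite composite of fiber inclusions. -/
inductive IsIntervalInclusion : ∀ {K J : C}, (K ⟶ J) → Prop
  | id (J : C) : IsIntervalInclusion (𝟙 J)
  | comp {L K J : C} {g : L ⟶ K} {f : K ⟶ J} :
      IsFiberInclusion f → IsIntervalInclusion g → IsIntervalInclusion (g ≫ f)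

theorem IsFiberInclusion.mono {K J : C} {k : K ⟶ J} (h : IsFiberInclusion k) : Mono k := by
  obtain ⟨_, _, i, hk⟩ := h
  exact hk.mono_fst_of_mono (OperatorCategory.isTerminalOne.mono_from i)

/-- interval inclusions in an operator category are monomorphisms. -/
theorem isIntervalInclusion_mono {K J : C} {f : K ⟶ J}
    (hf : IsIntervalInclusion f) : Mono f := by
  induction hf with
  | id => infer_instance
  | comp hfib _ _ =>
    have := hfib.mono
    exact mono_comp _ _
end

section
/- In an operator category Φ, the pullback of any morphism L → J along an interval inclusion K ↪ J exists, and the canonical morphism K ×_J L → L is again an interval inclusion. -/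
open CategoryTheory Limits

universe v u v' u'

variable {C : Type u} [Category.{v} C] [OperatorCategory C]

/-!
If `k` is the fiber of `f : J ⟶ I` over a point `i`, then by the pasting lemma its pullback along
any `l : L ⟶ J` is the fiber of `l ≫ f` over `i`, which exists and is again a fiber inclusion.
Pasting these squares along a factorization of an interval inclusion into fiber inclusions
gives the general case.
-/

theorem IsFiberInclusion.of_isPullback {P L I : C} {p : P ⟶ L}
    {t : P ⟶ OperatorCategory.One} {g : L ⟶ I} {i : OperatorCategory.One ⟶ I}
    (h : IsPullback p t g i) : IsFiberInclusion p := by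
  refine ⟨I, g, i, ?_⟩
  rwa [OperatorCategory.isTerminalOne.hom_ext (OperatorCategory.isTerminalOne.from P) t]

theorem IsFiberInclusion.exists_isPullback {K J L : C} {k : K ⟶ J} (hk : IsFiberInclusion k)
    (l : L ⟶ J) :
    ∃ (P : C) (fst : P ⟶ K) (snd : P ⟶ L), IsPullback fst snd k l ∧ IsFiberInclusion snd := by
  obtain ⟨I, f, i, hk⟩ := hk
  have := OperatorCategory.fibers (l ≫ f) i
  have fiber := (IsPullback.of_hasPullback i (l ≫ f)).flip
  exact ⟨_, _, _, (fiber.of_bot' hk).flip, .of_isPullback fiber⟩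

/-- pullbacks along interval inclusions exist, and the projection
to the other leg is again an interval inclusion. -/
theorem pullback_along_intervalInclusion {K J L : C} {k : K ⟶ J}
    (hk : IsIntervalInclusion k) (l : L ⟶ J) :
    ∃ (P : C) (fst : P ⟶ K) (snd : P ⟶ L),
      IsPullback fst snd k l ∧ IsIntervalInclusion snd := by
  induction hk generalizing L with
  | id => exact ⟨L, l, 𝟙 L, .id_vert l, .id L⟩
  | comp hf _ ih =>
    obtain ⟨Q, fst, snd, hQ, hsnd⟩ := hf.exists_isPullback l
    obtain ⟨P, fst', snd', hP, hsnd'⟩ := ih fst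
    exact ⟨P, fst', snd' ≫ snd, hP.paste_vert hQ, .comp hsnd hsnd'⟩
end

section
/- In an operator category Φ, if φ : K ↪ J is an interval inclusion and ψ : L → K is any morphism, then ψ is an interval inclusion if and only if the composite φ ∘ ψ is an interval inclusion. -/
open CategoryTheory Limits

universe v u v' u'

variable {C : Type u} [Category.{v} C] [OperatorCategory C]

/-!
Fiber inclusions are monomorphisms, stable under base change, and pullbacks along them exist.
If `χ ≫ f = g ≫ f'` with `f` and `f'` fiber inclusions, then `χ` is the base change of `f'`
precomposed with the map `u` into the pullback, and `u` followed by the base change of `f` is `g`.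
Induction on the length of `g` thus shows that interval inclusions can be cancelled by fiber
inclusions, and hence by interval inclusions.
-/

open OperatorCategory

namespace IsFiberInclusion

lemma of_isIso {L K : C} (e : L ⟶ K) [IsIso e] : IsFiberInclusion e :=
  ⟨One, isTerminalOne.from K, 𝟙 _,
    IsPullback.of_horiz_isIso ⟨isTerminalOne.hom_ext _ _⟩⟩

lemma mono_s5 {K J : C} {f : K ⟶ J} (hf : IsFiberInclusion f) : Mono f := by
  obtain ⟨I, g, i, hpb⟩ := hf
  exact ⟨fun a b hab => hpb.hom_ext hab (isTerminalOne.hom_ext _ _)⟩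

/-- Pasting the two pullback squares exhibits `q` as the fiber of `f' ≫ g` over the same point. -/
lemma of_isPullback_s5 {P K K' J : C} {p : P ⟶ K} {q : P ⟶ K'} {f : K ⟶ J} {f' : K' ⟶ J}
    (h : IsPullback p q f f') (hf : IsFiberInclusion f) : IsFiberInclusion q := by
  obtain ⟨I, g, i, hpb⟩ := hf
  have hpaste := h.flip.paste_vert hpb
  rw [isTerminalOne.hom_ext (p ≫ isTerminalOne.from K) (isTerminalOne.from P)] at hpaste
  exact ⟨I, f' ≫ g, i, hpaste⟩

/-- The pullback of `f' : K' ⟶ J` along a fiber `K ⊆ J` over `i` is the fiber of `f' ≫ g` over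
`i`, which exists by the axioms of an operator category. -/
lemma hasPullback {K K' J : C} {f : K ⟶ J} (hf : IsFiberInclusion f) (f' : K' ⟶ J) :
    HasPullback f f' := by
  obtain ⟨I, g, i, hpb⟩ := hf
  have := fibers (f' ≫ g) i
  have hfib := (IsPullback.of_hasPullback i (f' ≫ g)).flip
  have hw : (pullback.snd i (f' ≫ g) ≫ f') ≫ g = pullback.fst i (f' ≫ g) ≫ i := by
    rw [Category.assoc]; exact hfib.w
  rw [← hpb.lift_snd _ _ hw] at hfib
  exact (IsPullback.of_bot hfib (hpb.lift_fst _ _ hw).symm hpb).flip.hasPullback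

end IsFiberInclusion

namespace IsIntervalInclusion

lemma of_isIso {L K : C} (e : L ⟶ K) [IsIso e] : IsIntervalInclusion e := by
  simpa using comp (IsFiberInclusion.of_isIso e) (id L)

lemma trans {L K J : C} {ψ : L ⟶ K} {φ : K ⟶ J}
    (hψ : IsIntervalInclusion ψ) (hφ : IsIntervalInclusion φ) :
    IsIntervalInclusion (ψ ≫ φ) := by
  induction hφ with
  | id => simpa using hψ
  | comp hf _ ih =>
    rw [← Category.assoc]
    exact comp hf ih

lemma of_comp_isFiberInclusion {M K J : C} {χ : M ⟶ K} {f : K ⟶ J}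
    (hf : IsFiberInclusion f) (hχf : IsIntervalInclusion (χ ≫ f)) : IsIntervalInclusion χ := by
  generalize hβ : χ ≫ f = β at hχf
  induction hχf generalizing K with
  | id =>
    -- `f` is a split epimorphism and a monomorphism, so `χ = f⁻¹`.
    have := hf.mono_s5
    have : IsSplitEpi f := ⟨⟨χ, hβ⟩⟩
    have := isIso_of_mono_of_isSplitEpi f
    rw [IsIso.eq_inv_of_inv_hom_id hβ]
    exact of_isIso _
  | @comp K' _ g f' hf' _ ih =>
    have := hf.hasPullback f'
    have hsq := IsPullback.of_hasPullback f f'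
    rw [← pullback.lift_fst χ g hβ]
    exact comp (IsFiberInclusion.of_isPullback_s5 hsq.flip hf')
      (ih (IsFiberInclusion.of_isPullback_s5 hsq hf) (pullback.lift_snd χ g hβ))

lemma of_comp {L K J : C} {ψ : L ⟶ K} {φ : K ⟶ J} (hφ : IsIntervalInclusion φ)
    (hψφ : IsIntervalInclusion (ψ ≫ φ)) : IsIntervalInclusion ψ := by
  induction hφ generalizing ψ with
  | id => simpa using hψφ
  | comp hf _ ih =>
    rw [← Category.assoc] at hψφ
    exact ih (of_comp_isFiberInclusion hf hψφ)

end IsIntervalInclusion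

/-- if `φ` is an interval inclusion, then `ψ` is an interval
inclusion if and only if `ψ ≫ φ` is. -/
theorem isIntervalInclusion_comp_iff {L K J : C} (ψ : L ⟶ K) {φ : K ⟶ J}
    (hφ : IsIntervalInclusion φ) :
    IsIntervalInclusion ψ ↔ IsIntervalInclusion (ψ ≫ φ) :=
  ⟨fun hψ => hψ.trans hφ, hφ.of_comp⟩
end

section
/- Let Φ be a perfect operator category with point classifier (T, t) and let T also denote the induced endofunctor I ↦ TI. Then the counit κ : (E I)_t → I of the adjunction (fib ⊣ E) is an isomorphism for every I; i.e., Φ is a colocalization of Φ/T, and for each object I the square with I ↪ TI over {t} ↪ T is a pullback square. -/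
/-!
The special fiber functor has the left adjoint `I ↦ (I → * → T)`, and the unit
`I → {t} ×_T I` of that adjunction is an isomorphism because `*` is terminal. In an adjoint
triple `L ⊣ fib ⊣ E` the unit of `L ⊣ fib` is invertible exactly when the counit of `fib ⊣ E`
is. Transporting the pullback square defining `(E I)_t` along the counit `(E I)_t ≅ I` then
gives the square with top `I → TI`.
-/

open CategoryTheory Limits

universe v u v' u'

variable {Φ : Type u} [Category.{v} Φ] [OperatorCategory Φ]

instance hasPullbackPoint {J I : Φ} (f : J ⟶ I) (i : (OperatorCategory.One : Φ) ⟶ I) :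
    HasPullback i f :=
  OperatorCategory.fibers f i

variable (Φ)

/-- The special fiber functor `fib : Φ/T → Φ`, sending `φ : I → T` to the
fiber `I_t = {t} ×_T I`. -/
noncomputable def fibFunctor (Tobj : Φ) (t : (OperatorCategory.One : Φ) ⟶ Tobj) : Over Tobj ⥤ Φ where
  obj X := pullback t X.hom
  map {X Y} h := pullback.map t X.hom t Y.hom (𝟙 _) h.left (𝟙 _) (by simp) (by simp)
  map_id := by intros; apply pullback.hom_ext <;> simp
  map_comp := by intros; apply pullback.hom_ext <;> simp only [pullback.map, pullback.lift_fst, pullback.lift_snd, pullback.lift_fst_assoc, pullback.lift_snd_assoc, Category.assoc, Over.comp_left, Category.comp_id]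

open OperatorCategory

section

variable {Φ} (Tobj : Φ) (t : (One : Φ) ⟶ Tobj)

abbrev constOver : Φ ⥤ Over Tobj where
  obj I := Over.mk (isTerminalOne.from I ≫ t)
  map f := Over.homMk f (by dsimp; rw [← Category.assoc, isTerminalOne.comp_from])

noncomputable def fibι (X : Over Tobj) : (fibFunctor Φ Tobj t).obj X ⟶ X.left :=
  pullback.snd t X.hom

lemma fibFunctor_map_comp_fibι {X Y : Over Tobj} (h : X ⟶ Y) :
    (fibFunctor Φ Tobj t).map h ≫ fibι Tobj t Y = fibι Tobj t X ≫ h.left :=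
  pullback.lift_snd _ _ _

noncomputable def constOverAdj : constOver Tobj t ⊣ fibFunctor Φ Tobj t where
  unit :=
    { app := fun I => pullback.lift (isTerminalOne.from I) (𝟙 I) (by simp)
      naturality := fun I J f => pullback.hom_ext (isTerminalOne.hom_ext _ _) (by
        erw [Category.assoc, Category.assoc, pullback.lift_snd, pullback.lift_snd,
          pullback.lift_snd_assoc, Category.id_comp]
        exact Category.comp_id _) }
  counit :=
    { app := fun X => Over.homMk (fibι Tobj t X) (by
        erw [← pullback.condition, isTerminalOne.hom_ext (pullback.fst _ _)]; rfl)
      naturality := fun X Y f => by ext; exact fibFunctor_map_comp_fibι Tobj t f }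
  left_triangle_components I := by ext; exact pullback.lift_snd _ _ _
  right_triangle_components X := by
    refine pullback.hom_ext (isTerminalOne.hom_ext _ _) ?_
    erw [Category.assoc, pullback.lift_snd, pullback.lift_snd_assoc, Category.id_comp]

lemma constOverAdj_unit_app_comp_fibι (I : Φ) :
    (constOverAdj Tobj t).unit.app I ≫ fibι Tobj t ((constOver Tobj t).obj I) = 𝟙 I :=
  pullback.lift_snd _ _ _

instance isIso_fibι_constOver (I : Φ) : IsIso (fibι Tobj t ((constOver Tobj t).obj I)) :=
  ⟨(constOverAdj Tobj t).unit.app I,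
    pullback.hom_ext (isTerminalOne.hom_ext _ _) (by
      erw [Category.assoc, constOverAdj_unit_app_comp_fibι, Category.comp_id, Category.id_comp]
      rfl),
    constOverAdj_unit_app_comp_fibι Tobj t I⟩

instance isIso_constOverAdj_unit : IsIso (constOverAdj Tobj t).unit := by
  have (I : Φ) : IsIso ((constOverAdj Tobj t).unit.app I) := by
    rw [IsIso.eq_inv_of_inv_hom_id (constOverAdj_unit_app_comp_fibι Tobj t I)]
    infer_instance
  exact NatIso.isIso_of_isIso_app _

variable {Tobj t} {E : Φ ⥤ Over Tobj} (adj : fibFunctor Φ Tobj t ⊣ E)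

lemma isIso_counit_app_of_fibFunctor_adjunction (I : Φ) : IsIso (adj.counit.app I) := by
  have := (Adjunction.Triple.mk (constOverAdj Tobj t) adj).isIso_unit_iff_isIso_counit.mp
    inferInstance
  infer_instance

lemma counit_comp_homEquiv_fibι_left (I : Φ) :
    adj.counit.app I ≫ (adj.homEquiv ((constOver Tobj t).obj I) I (fibι Tobj t _)).left =
      fibι Tobj t (E.obj I) := by
  set h := adj.homEquiv ((constOver Tobj t).obj I) I (fibι Tobj t _)
  have h_counit : (fibFunctor Φ Tobj t).map h ≫ adj.counit.app I = fibι Tobj t _ :=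
    (adj.homEquiv_counit _ _ h).symm.trans (Equiv.symm_apply_apply _ _)
  have : IsIso ((fibFunctor Φ Tobj t).map h) := by
    have := isIso_counit_app_of_fibFunctor_adjunction adj I
    have : IsIso ((fibFunctor Φ Tobj t).map h ≫ adj.counit.app I) := by
      rw [h_counit]; infer_instance
    exact IsIso.of_isIso_comp_right _ (adj.counit.app I)
  rw [← cancel_epi ((fibFunctor Φ Tobj t).map h), reassoc_of% h_counit,
    fibFunctor_map_comp_fibι]

lemma isPullback_homEquiv_fibι_left (I : Φ) :
    IsPullback (adj.homEquiv ((constOver Tobj t).obj I) I (fibι Tobj t _)).left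
      (isTerminalOne.from I) (E.obj I).hom t := by
  have := isIso_counit_app_of_fibFunctor_adjunction adj I
  let c : (fibFunctor Φ Tobj t).obj (E.obj I) ≅ I := asIso (adj.counit.app I)
  refine IsPullback.flip <| (IsPullback.of_hasPullback t (E.obj I).hom).of_iso
    c (Iso.refl _) (Iso.refl _) (Iso.refl _) (isTerminalOne.hom_ext _ _) ?_ (by simp) (by simp)
  exact (Category.comp_id _).trans (counit_comp_homEquiv_fibι_left adj I).symm

end

theorem perfect_counit_iso_and_unit_pullback (Tobj : Φ)
    (t : (OperatorCategory.One : Φ) ⟶ Tobj)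
    (E : Φ ⥤ Over Tobj) (adj : fibFunctor Φ Tobj t ⊣ E) :
    (∀ I : Φ, IsIso (adj.counit.app I)) ∧
    (∀ I : Φ,
      IsPullback
        ((adj.homEquiv (Over.mk (OperatorCategory.isTerminalOne.from I ≫ t)) I
            (pullback.snd t (OperatorCategory.isTerminalOne.from I ≫ t))).left)
        (OperatorCategory.isTerminalOne.from I) ((E.obj I).hom) t) :=
  ⟨isIso_counit_app_of_fibFunctor_adjunction adj, isPullback_homEquiv_fibι_left adj⟩
end

section
/- For any object I of a perfect operator category Φ, the square with horizontal maps ι_I : I → TI, ι_{TI} : TI → T²I and vertical maps the identity on I and the multiplication μ_I : T²I → TI, with bottom map ι_I : I → TI, is a pullback square; that is, the pullback of ι_I : I → TI along μ_I : T²I → TI is ι_{TI}∘ι_I : I → T²I. -/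
/-! The unit `ι` is cartesian: each naturality square of `ι` lies over the fiber square of
some `e_J`, so it is a pullback by cancellation. Pasting the fiber square of `e_I`, the
naturality square of `ι` at `e_I` and the square classifying `ι_T(t)` exhibits
`ι_{TI} ∘ ι_I` as the fiber over `t` of `T(e_I) ≫ χ_t = μ_I ≫ e_I`. Since `ι_I` is the
fiber of `e_I` over `t`, cancelling that square leaves the claimed pullback. -/

open CategoryTheory Limits

universe v u

variable {Φ : Type u} [Category.{v} Φ] [OperatorCategory Φ]

theorem NatTrans.isPullback_naturality_of_isPullback_fiber {C : Type*} [Category C] {Z : C}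
    (hZ : IsTerminal Z) {F : C ⥤ C} (η : 𝟭 C ⟶ F) {U : C} (t : Z ⟶ U)
    (e : ∀ I : C, F.obj I ⟶ U) (he : ∀ {I J : C} (f : I ⟶ J), F.map f ≫ e J = e I)
    (hη : ∀ I : C, IsPullback (η.app I) (hZ.from I) (e I) t) {A B : C} (f : A ⟶ B) :
    IsPullback (η.app A) f (F.map f) (η.app B) := by
  refine IsPullback.of_bot ?_ (η.naturality f).symm (hη B)
  rw [hZ.hom_ext (f ≫ hZ.from B) (hZ.from A), he f]
  exact hη A

/-- for the canonical monad `T` (with unit `ι` and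
multiplication `μ`) on a perfect operator category `Φ`, the square with
horizontal maps `ι_I : I → TI`, `ι_{TI} : TI → T²I`, vertical maps `𝟙 I` and
`μ_I : T²I → TI` and bottom `ι_I` is a pullback square: the pullback of
`ι_I` along `μ_I` is `ι_{TI} ∘ ι_I`. -/
theorem unit_mul_pullback
    (T : Monad Φ) (Tobj : Φ) (t : (OperatorCategory.One : Φ) ⟶ Tobj)
    (e : ∀ I : Φ, T.obj I ⟶ Tobj)
    (he : ∀ {I J : Φ} (f : I ⟶ J), T.map f ≫ e J = e I)
    -- the unit `ι_I` exhibits `I` as the special fiber of `e_I : TI → T`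
    (hη : ∀ I : Φ,
      IsPullback (T.η.app I) (OperatorCategory.isTerminalOne.from I) (e I) t)
    -- `χ_t : TT → T` classifies the point `ι_T(t)` of `TT`
    (χt : T.obj Tobj ⟶ Tobj)
    (hχt : IsPullback (t ≫ T.η.app Tobj) (𝟙 (OperatorCategory.One : Φ)) χt t)
    -- the defining property of the multiplication `μ`
    (hμ : ∀ I : Φ, T.μ.app I ≫ e I = T.map (e I) ≫ χt)
    (I : Φ) :
    IsPullback (T.η.app I ≫ T.η.app (T.obj I)) (𝟙 I) (T.μ.app I) (T.η.app I) := by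
  let hZ := OperatorCategory.isTerminalOne (C := Φ)
  have fiber_over_t :
      IsPullback (T.η.app I ≫ T.η.app (T.obj I)) (hZ.from I ≫ 𝟙 _)
        (T.map (e I) ≫ χt) t :=
    ((hη I).paste_horiz
      (NatTrans.isPullback_naturality_of_isPullback_fiber hZ T.η t e he hη (e I))).paste_vert
      hχt
  rw [hZ.hom_ext (hZ.from I ≫ 𝟙 _) (𝟙 I ≫ hZ.from I), ← hμ I] at fiber_over_t
  exact fiber_over_t.of_bot (by simp) (hη I)
end
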